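/- arXiv:2301.12384 — 2 statements merged into one kernel-verified Lean document; each statement's English description precedes it below -/
import Mathlib

section
/- For a continuous action φ: G × X → X on a compact metric space, the set of persistent shadowable points equals the intersection of the set of uniformly β-persistent points and the set of shadowable points: PSh(φ) = UPersis_β(φ) ∩ Sh(φ). -/
open MeasureTheory

def ContGroupAction (G : Type*) [Group G] (X : Type*) [MetricSpace X] (φ : G → X → X) : Prop :=
  (∀ g : G, Continuous (φ g)) ∧ (∀ g h : G, ∀ x : X, φ (g * h) x = φ g (φ h x)) ∧
    (∀ x : X, φ (1 : G) x = x)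

def IsPseudoOrbit {G : Type*} [Group G] {X : Type*} [MetricSpace X]
    (S : Set G) (ψ : G → X → X) (δ : ℝ) (f : G → X) : Prop :=
  ∀ s ∈ S, ∀ g : G, dist (f (s * g)) (ψ s (f g)) < δ

def CloseActions {G : Type*} [Group G] {X : Type*} [MetricSpace X]
    (S : Set G) (φ ψ : G → X → X) (δ : ℝ) : Prop :=
  ∀ s ∈ S, ∀ x : X, dist (φ s x) (ψ s x) < δ

def PersistentShadowing {G : Type*} [Group G] {X : Type*} [MetricSpace X]
    (S : Set G) (φ : G → X → X) : Prop :=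
  ∀ ε > (0:ℝ), ∃ δ > (0:ℝ), ∀ ψ : G → X → X, ContGroupAction G X ψ → CloseActions S φ ψ δ →
    ∀ f : G → X, IsPseudoOrbit S ψ δ f → ∃ p : X, ∀ g : G, dist (f g) (ψ g p) < ε

def Shadowing {G : Type*} [Group G] {X : Type*} [MetricSpace X]
    (S : Set G) (φ : G → X → X) : Prop :=
  ∀ ε > (0:ℝ), ∃ δ > (0:ℝ), ∀ f : G → X, IsPseudoOrbit S φ δ f →
    ∃ p : X, ∀ g : G, dist (f g) (φ g p) < ε

def PShSet {G : Type*} [Group G] {X : Type*} [MetricSpace X]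
    (S : Set G) (φ : G → X → X) (δ ε : ℝ) : Set X :=
  {x | ∀ ψ : G → X → X, ContGroupAction G X ψ → CloseActions S φ ψ δ →
    ∀ f : G → X, IsPseudoOrbit S ψ δ f → f 1 = x →
      ∃ p : X, ∀ g : G, dist (f g) (ψ g p) < ε}

def PShPoint {G : Type*} [Group G] {X : Type*} [MetricSpace X]
    (S : Set G) (φ : G → X → X) (x : X) : Prop :=
  ∀ ε > (0:ℝ), ∃ δ > (0:ℝ), x ∈ PShSet S φ δ ε

def ShPoint {G : Type*} [Group G] {X : Type*} [MetricSpace X]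
    (S : Set G) (φ : G → X → X) (x : X) : Prop :=
  ∀ ε > (0:ℝ), ∃ δ > (0:ℝ), ∀ f : G → X, IsPseudoOrbit S φ δ f → f 1 = x →
    ∃ p : X, ∀ g : G, dist (f g) (φ g p) < ε

def UPersisBetaPoint {G : Type*} [Group G] {X : Type*} [MetricSpace X]
    (S : Set G) (φ : G → X → X) (x : X) : Prop :=
  ∀ ε > (0:ℝ), ∃ δ > (0:ℝ), ∀ ψ : G → X → X, ContGroupAction G X ψ → CloseActions S φ ψ δ →
    ∀ x' : X, dist x' x < δ → ∃ y : X, ∀ g : G, dist (φ g x') (ψ g y) < ε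

def BetaPersistent {G : Type*} [Group G] {X : Type*} [MetricSpace X]
    (S : Set G) (φ : G → X → X) : Prop :=
  ∀ ε > (0:ℝ), ∃ δ > (0:ℝ), ∀ ψ : G → X → X, ContGroupAction G X ψ → CloseActions S φ ψ δ →
    ∀ x : X, ∃ y : X, ∀ g : G, dist (φ g x) (ψ g y) < ε

def CompatiblePSh {G : Type*} [Group G] {X : Type*} [MetricSpace X] [MeasurableSpace X]
    (S : Set G) (φ : G → X → X) (μ : Measure X) : Prop :=
  ∀ ε > (0:ℝ), ∃ δ > (0:ℝ), ∀ A : Set X, MeasurableSet A → 0 < μ A →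
    (A ∩ PShSet S φ δ ε).Nonempty

def MeasSupp {X : Type*} [MetricSpace X] [MeasurableSpace X] (μ : Measure X) : Set X :=
  {x | ∀ U : Set X, IsOpen U → x ∈ U → 0 < μ U}

/-!
A persistent shadowable point is shadowable (take `ψ = φ`). It is also uniformly
β-persistent: for `x'` near `x`, the `φ`-orbit of `x'` with its value at `1` replaced by `x`
is a pseudo-orbit of every action `ψ` close to `φ` (this is where finiteness of `S` enters,
through continuity of the finitely many `φ s` at `x`), and a `ψ`-orbit shadowing it traces
the `φ`-orbit of `x'`. Conversely, a pseudo-orbit of `ψ` through `x` is a pseudo-orbit of `φ`,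
so it is shadowed by a `φ`-orbit starting near `x`, which in turn is traced by a `ψ`-orbit.
-/

open Filter Topology

section

variable {G : Type*} [Group G] {X : Type*} [MetricSpace X] {S : Set G} {φ ψ : G → X → X}

theorem CloseActions.mono {δ δ' : ℝ} (h : CloseActions S φ ψ δ) (hδ : δ ≤ δ') :
    CloseActions S φ ψ δ' :=
  fun s hs x => (h s hs x).trans_le hδ

theorem closeActions_self {δ : ℝ} (hδ : 0 < δ) : CloseActions S φ φ δ :=
  fun s _ x => by rwa [dist_self]

theorem IsPseudoOrbit.mono {δ δ' : ℝ} {f : G → X} (h : IsPseudoOrbit S ψ δ f) (hδ : δ ≤ δ') :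
    IsPseudoOrbit S ψ δ' f :=
  fun s hs g => (h s hs g).trans_le hδ

theorem IsPseudoOrbit.of_closeActions {δ δ' : ℝ} {f : G → X} (hf : IsPseudoOrbit S ψ δ f)
    (hφψ : CloseActions S φ ψ δ') : IsPseudoOrbit S φ (δ + δ') f := fun s hs g =>
  calc dist (f (s * g)) (φ s (f g))
      ≤ dist (f (s * g)) (ψ s (f g)) + dist (ψ s (f g)) (φ s (f g)) := dist_triangle _ _ _
    _ < δ + δ' := add_lt_add (hf s hs g) (by rw [dist_comm]; exact hφψ s hs (f g))

theorem dist_apply_update_orbit_le [DecidableEq G] {x x' : X} (h1 : φ 1 x' = x') (g : G) :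
    dist (φ g x') (Function.update (φ · x') 1 x g) ≤ dist x' x := by
  by_cases hg : g = 1
  · subst hg
    simp [h1]
  · simp [hg]

theorem isPseudoOrbit_update_orbit [DecidableEq G] (hφ : ContGroupAction G X φ)
    (hψ1 : ∀ y, ψ 1 y = y) {δ : ℝ} {x x' : X} (hφψ : CloseActions S φ ψ (δ / 2))
    (hx' : dist x' x < δ / 2) (hnear : ∀ s ∈ S, dist (φ s x') (φ s x) < δ / 2) :
    IsPseudoOrbit S ψ δ (Function.update (φ · x') 1 x) := by
  intro s hs g
  have hδ : 0 < δ := by linarith [dist_nonneg (x := x') (y := x)]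
  by_cases hg : g = 1
  · subst hg
    by_cases hs1 : s = 1
    · subst hs1
      simpa [hψ1] using hδ
    · simp only [mul_one, Function.update_self, ne_eq, hs1, not_false_eq_true,
        Function.update_of_ne]
      calc dist (φ s x') (ψ s x) ≤ dist (φ s x') (φ s x) + dist (φ s x) (ψ s x) :=
            dist_triangle _ _ _
        _ < δ / 2 + δ / 2 := add_lt_add (hnear s hs) (hφψ s hs x)
        _ = δ := add_halves δ
  · have hmul : φ (s * g) x' = φ s (φ g x') := hφ.2.1 s g x'
    by_cases hsg : s * g = 1
    · have hback : φ s (φ g x') = x' := by rw [← hmul, hsg, hφ.2.2]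
      simp only [hsg, Function.update_self, ne_eq, hg, not_false_eq_true, Function.update_of_ne]
      calc dist x (ψ s (φ g x')) ≤ dist x x' + dist (φ s (φ g x')) (ψ s (φ g x')) := by
            rw [hback]; exact dist_triangle _ _ _
        _ < δ / 2 + δ / 2 := add_lt_add (by rwa [dist_comm]) (hφψ s hs _)
        _ = δ := add_halves δ
    · simp only [ne_eq, hsg, not_false_eq_true, Function.update_of_ne, hg, hmul]
      exact (hφψ s hs _).trans (half_lt_self hδ)

theorem ShPoint.of_pshPoint (hφ : ContGroupAction G X φ) {x : X} (hx : PShPoint S φ x) :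
    ShPoint S φ x := fun ε hε =>
  let ⟨δ, hδ, hxδ⟩ := hx ε hε
  ⟨δ, hδ, hxδ φ hφ (closeActions_self hδ)⟩

theorem UPersisBetaPoint.of_pshPoint (hS : S.Finite) (hφ : ContGroupAction G X φ) {x : X}
    (hx : PShPoint S φ x) : UPersisBetaPoint S φ x := by
  classical
  intro ε hε
  obtain ⟨δ, hδ, hxδ⟩ := hx (ε / 2) (half_pos hε)
  have hnear : ∀ᶠ x' in 𝓝 x, ∀ s ∈ S, dist (φ s x') (φ s x) < δ / 2 :=
    hS.eventually_all.2 fun s _ =>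
      Metric.tendsto_nhds.1 (hφ.1 s).continuousAt _ (half_pos hδ)
  obtain ⟨r, hr, hnear⟩ := Metric.eventually_nhds_iff.1 hnear
  refine ⟨min r (min (δ / 2) (ε / 2)), by positivity, fun ψ hψ hφψ x' hx' => ?_⟩
  have hx'r : dist x' x < r := hx'.trans_le (min_le_left _ _)
  have hx'δ : dist x' x < δ / 2 := hx'.trans_le ((min_le_right _ _).trans (min_le_left _ _))
  have hx'ε : dist x' x < ε / 2 := hx'.trans_le ((min_le_right _ _).trans (min_le_right _ _))
  have hφψ' : CloseActions S φ ψ (δ / 2) :=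
    hφψ.mono ((min_le_right _ _).trans (min_le_left _ _))
  obtain ⟨p, hp⟩ := hxδ ψ hψ (hφψ'.mono (half_le_self hδ.le)) _
    (isPseudoOrbit_update_orbit hφ hψ.2.2 hφψ' hx'δ (hnear hx'r)) (Function.update_self ..)
  refine ⟨p, fun g => ?_⟩
  calc dist (φ g x') (ψ g p)
      ≤ dist (φ g x') (Function.update (φ · x') 1 x g)
        + dist (Function.update (φ · x') 1 x g) (ψ g p) := dist_triangle _ _ _
    _ < ε / 2 + ε / 2 :=
        add_lt_add_of_le_of_lt ((dist_apply_update_orbit_le (hφ.2.2 x') g).trans_lt hx'ε).le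
          (hp g)
    _ = ε := add_halves ε

theorem PShPoint.of_uPersisBetaPoint_of_shPoint (hφ : ContGroupAction G X φ) {x : X}
    (hu : UPersisBetaPoint S φ x) (hs : ShPoint S φ x) : PShPoint S φ x := by
  intro ε hε
  obtain ⟨δu, hδu, hu⟩ := hu (ε / 2) (half_pos hε)
  obtain ⟨δs, hδs, hs⟩ := hs (min (ε / 2) δu) (lt_min (half_pos hε) hδu)
  refine ⟨min (δs / 2) δu, by positivity, fun ψ hψ hφψ f hf hf1 => ?_⟩
  have hfφ : IsPseudoOrbit S φ δs f :=
    (hf.of_closeActions hφψ).mono (by linarith [min_le_left (δs / 2) δu])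
  obtain ⟨p, hp⟩ := hs f hfφ hf1
  have hpx : dist p x < δu := by
    have h1 := hp 1
    rw [hf1, hφ.2.2, dist_comm] at h1
    exact h1.trans_le (min_le_right _ _)
  obtain ⟨y, hy⟩ := hu ψ hψ (hφψ.mono (min_le_right _ _)) p hpx
  refine ⟨y, fun g => ?_⟩
  calc dist (f g) (ψ g y) ≤ dist (f g) (φ g p) + dist (φ g p) (ψ g y) := dist_triangle _ _ _
    _ < ε / 2 + ε / 2 := add_lt_add ((hp g).trans_le (min_le_left _ _)) (hy g)
    _ = ε := add_halves ε

end

theorem stmt14_general {G : Type*} [Group G] {X : Type*} [MetricSpace X]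
    (S : Set G) (hSfin : S.Finite)
    (φ : G → X → X) (hφ : ContGroupAction G X φ) :
    {x : X | PShPoint S φ x} =
      {x : X | UPersisBetaPoint S φ x} ∩ {x : X | ShPoint S φ x} := by
  ext x
  exact ⟨fun hx => ⟨UPersisBetaPoint.of_pshPoint hSfin hφ hx, ShPoint.of_pshPoint hφ hx⟩,
    fun ⟨hu, hs⟩ => PShPoint.of_uPersisBetaPoint_of_shPoint hφ hu hs⟩

theorem stmt14 {G : Type*} [Group G] {X : Type*} [MetricSpace X] [CompactSpace X]
    (S : Set G) (hSfin : S.Finite) (hSsym : ∀ s ∈ S, s⁻¹ ∈ S)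
    (hSgen : Subgroup.closure S = ⊤)
    (φ : G → X → X) (hφ : ContGroupAction G X φ) :
    {x : X | PShPoint S φ x} =
      {x : X | UPersisBetaPoint S φ x} ∩ {x : X | ShPoint S φ x} :=
  stmt14_general S hSfin φ hφ
end

section
/- For a continuous action φ: G × X → X on a compact metric space X, a Borel probability measure μ is compatible with the persistent shadowing property for φ if and only if supp(μ) ⊆ PSh(φ). -/
open MeasureTheory

/-!
A point close to a persistent-shadowing point is itself one, with slightly worse constants: given
a pseudo-orbit through `x` with `x` near `y ∈ PShSet δ (ε/2)`, moving its value at `1` to `y`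
yields a pseudo-orbit through `y`, and the orbit shadowing the latter also shadows the former.
Uniform continuity of the generators makes the size of the neighbourhood independent of `y`.
Hence positive-measure sets near a support point meet `PShSet`, and conversely compactness of
the support gives a single `δ` that works on the whole support.
-/

open Metric

section PersistentShadowing

variable {G : Type*} [Group G] {X : Type*} [MetricSpace X]

lemma exists_pos_forall_dist_lt_of_finite {ι : Type*} {Y : Type*} [MetricSpace Y] [CompactSpace X]
    {S : Set ι} (hS : S.Finite) {F : ι → X → Y} (hF : ∀ i, Continuous (F i)) {δ : ℝ}
    (hδ : 0 < δ) : ∃ η > 0, ∀ a b : X, dist a b < η → ∀ i ∈ S, dist (F i a) (F i b) < δ := by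
  have : Finite S := hS.to_subtype
  have hequi : UniformEquicontinuous fun i : S => F i :=
    uniformEquicontinuous_finite.mpr fun i => CompactSpace.uniformContinuous_of_continuous (hF i)
  obtain ⟨η, hη, h⟩ := Metric.uniformEquicontinuous_iff.mp hequi δ hδ
  exact ⟨η, hη, fun a b hab i hi => h a b hab ⟨i, hi⟩⟩

lemma IsPseudoOrbit.mono_s16 {S : Set G} {ψ : G → X → X} {α β : ℝ} {f : G → X}
    (hf : IsPseudoOrbit S ψ α f) (hαβ : α ≤ β) : IsPseudoOrbit S ψ β f :=
  fun s hs g => (hf s hs g).trans_le hαβ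

lemma CloseActions.mono_s16 {S : Set G} {φ ψ : G → X → X} {α β : ℝ}
    (h : CloseActions S φ ψ α) (hαβ : α ≤ β) : CloseActions S φ ψ β :=
  fun s hs x => (h s hs x).trans_le hαβ

lemma PShSet_subset_PShSet (S : Set G) (φ : G → X → X) {δ₁ δ₂ ε₁ ε₂ : ℝ} (hδ : δ₁ ≤ δ₂)
    (hε : ε₁ ≤ ε₂) : PShSet S φ δ₂ ε₁ ⊆ PShSet S φ δ₁ ε₂ := by
  intro x hx ψ hψ hclose f hf hf1
  obtain ⟨p, hp⟩ := hx ψ hψ (hclose.mono_s16 hδ) f (hf.mono_s16 hδ) hf1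
  exact ⟨p, fun g => (hp g).trans_le hε⟩

lemma IsPseudoOrbit.update_one [DecidableEq G] {S : Set G} {ψ : G → X → X}
    (hψ1 : ∀ x, ψ 1 x = x) {α β : ℝ} {f : G → X} (hf : IsPseudoOrbit S ψ α f) {y : X}
    (hy : dist y (f 1) < α) (hβ : ∀ s ∈ S, dist (ψ s (f 1)) (ψ s y) < β) :
    IsPseudoOrbit S ψ (2 * α + β) (Function.update f 1 y) := by
  intro s hs g
  have hα : 0 < α := dist_nonneg.trans_lt hy
  have hβ0 : 0 < β := dist_nonneg.trans_lt (hβ s hs)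
  rcases eq_or_ne g 1 with rfl | hg
  · rcases eq_or_ne s 1 with rfl | hs1
    · simp only [mul_one, Function.update_self, hψ1, dist_self]
      positivity
    · have hfs := hf s hs 1
      rw [mul_one] at hfs
      simp only [mul_one, Function.update_self, Function.update_of_ne hs1]
      linarith [dist_triangle (f s) (ψ s (f 1)) (ψ s y), hβ s hs]
  · rw [Function.update_of_ne hg]
    rcases eq_or_ne (s * g) 1 with hsg | hsg
    · have hfs := hf s hs g
      rw [hsg] at hfs ⊢
      rw [Function.update_self]
      linarith [dist_triangle y (f 1) (ψ s (f g))]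
    · rw [Function.update_of_ne hsg]
      linarith [hf s hs g]

lemma exists_forall_ball_subset_PShSet [CompactSpace X] {S : Set G} (hS : S.Finite)
    {φ : G → X → X} (hφ : ∀ g, Continuous (φ g)) {δ ε : ℝ} (hδ : 0 < δ) (hε : 0 < ε) :
    ∃ r > 0, ∀ y ∈ PShSet S φ δ (ε / 2), ball y r ⊆ PShSet S φ r ε := by
  classical
  obtain ⟨η, hη, hφη⟩ := exists_pos_forall_dist_lt_of_finite hS hφ (by positivity : 0 < δ / 4)
  refine ⟨min η (min (δ / 8) (ε / 2)), by positivity, ?_⟩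
  set r := min η (min (δ / 8) (ε / 2))
  have hrη : r ≤ η := min_le_left _ _
  have hrδ : r ≤ δ / 8 := (min_le_right _ _).trans (min_le_left _ _)
  have hrε : r ≤ ε / 2 := (min_le_right _ _).trans (min_le_right _ _)
  intro y hy x hxy ψ hψ hclose f hf hf1
  rw [mem_ball] at hxy
  subst hf1
  have hψβ : ∀ s ∈ S, dist (ψ s (f 1)) (ψ s y) < r + δ / 4 + r := fun s hs => by
    have h₁ := hclose s hs (f 1)
    rw [dist_comm] at h₁
    linarith [dist_triangle4 (ψ s (f 1)) (φ s (f 1)) (φ s y) (ψ s y), hclose s hs y,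
      hφη _ _ (hxy.trans_le hrη) s hs]
  have hf' : IsPseudoOrbit S ψ δ (Function.update f 1 y) :=
    (hf.update_one hψ.2.2 (by rwa [dist_comm]) hψβ).mono_s16 (by linarith)
  obtain ⟨p, hp⟩ := hy ψ hψ (hclose.mono_s16 (by linarith)) _ hf' (Function.update_self ..)
  refine ⟨p, fun g => ?_⟩
  rcases eq_or_ne g 1 with rfl | hg
  · have hp1 := hp 1
    rw [Function.update_self] at hp1
    linarith [dist_triangle (f 1) y (ψ 1 p)]
  · have hpg := hp g
    rw [Function.update_of_ne hg] at hpg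
    linarith

lemma PShPoint.exists_ball_subset_PShSet [CompactSpace X] {S : Set G} (hS : S.Finite)
    {φ : G → X → X} (hφ : ∀ g, Continuous (φ g)) {x : X} (hx : PShPoint S φ x) {ε : ℝ}
    (hε : 0 < ε) : ∃ r > 0, ball x r ⊆ PShSet S φ r ε := by
  obtain ⟨δ, hδ, hxδ⟩ := hx (ε / 2) (half_pos hε)
  obtain ⟨r, hr, hball⟩ := exists_forall_ball_subset_PShSet hS hφ hδ hε
  exact ⟨r, hr, hball x hxδ⟩

lemma IsCompact.exists_subset_PShSet [CompactSpace X] {S : Set G} (hS : S.Finite)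
    {φ : G → X → X} (hφ : ∀ g, Continuous (φ g)) {K : Set X} (hK : IsCompact K)
    (hKP : ∀ x ∈ K, PShPoint S φ x) {ε : ℝ} (hε : 0 < ε) : ∃ δ > 0, K ⊆ PShSet S φ δ ε := by
  have hcover : K ⊆ ⋃ n : ℕ, interior (PShSet S φ (1 / (n + 1)) ε) := fun x hx => by
    obtain ⟨r, hr, hball⟩ := (hKP x hx).exists_ball_subset_PShSet hS hφ hε
    obtain ⟨n, hn⟩ := exists_nat_one_div_lt hr
    exact Set.mem_iUnion.mpr ⟨n, interior_mono (PShSet_subset_PShSet S φ hn.le le_rfl)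
      (mem_interior.mpr ⟨ball x r, hball, isOpen_ball, mem_ball_self hr⟩)⟩
  obtain ⟨n, hn⟩ := hK.elim_directed_cover _ (fun _ => isOpen_interior) hcover
    (Monotone.directed_le fun m n hmn =>
      interior_mono (PShSet_subset_PShSet S φ (Nat.one_div_le_one_div hmn) le_rfl))
  exact ⟨1 / (n + 1), Nat.one_div_pos_of_nat, hn.trans interior_subset⟩

end PersistentShadowing

lemma measSupp_eq_support {X : Type*} [MetricSpace X] [MeasurableSpace X] (μ : Measure X) :
    MeasSupp μ = μ.support := by
  rw [Measure.support_eq_forall_isOpen]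
  ext x
  exact forall_congr' fun U => forall_comm

theorem stmt16_general {G : Type*} [Group G] {X : Type*} [MetricSpace X] [CompactSpace X]
    [MeasurableSpace X] [BorelSpace X]
    (S : Set G) (hSfin : S.Finite)
    (φ : G → X → X) (hφ : ContGroupAction G X φ)
    (μ : Measure X) :
    CompatiblePSh S φ μ ↔ MeasSupp μ ⊆ {x : X | PShPoint S φ x} := by
  rw [measSupp_eq_support]
  constructor
  · intro h x hx ε hε
    obtain ⟨δ, hδ, hmeets⟩ := h (ε / 2) (half_pos hε)
    obtain ⟨r, hr, hball⟩ := exists_forall_ball_subset_PShSet hSfin hφ.1 hδ hε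
    obtain ⟨y, hyx, hy⟩ := hmeets (ball x r) measurableSet_ball
      ((Measure.mem_support_iff_forall x).mp hx _ (ball_mem_nhds x hr))
    exact ⟨r, hr, hball y hy (mem_ball_comm.mp hyx)⟩
  · intro h ε hε
    obtain ⟨δ, hδ, hsupp⟩ :=
      Measure.isClosed_support.isCompact.exists_subset_PShSet hSfin hφ.1 h hε
    refine ⟨δ, hδ, fun A _ hA => ?_⟩
    obtain ⟨z, hzA, hz⟩ := Measure.nonempty_inter_support_of_pos hA
    exact ⟨z, hzA, hsupp hz⟩

theorem stmt16 {G : Type*} [Group G] {X : Type*} [MetricSpace X] [CompactSpace X]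
    [MeasurableSpace X] [BorelSpace X]
    (S : Set G) (hSfin : S.Finite) (hSsym : ∀ s ∈ S, s⁻¹ ∈ S)
    (hSgen : Subgroup.closure S = ⊤)
    (φ : G → X → X) (hφ : ContGroupAction G X φ)
    (μ : Measure X) [IsProbabilityMeasure μ] :
    CompatiblePSh S φ μ ↔ MeasSupp μ ⊆ {x : X | PShPoint S φ x} :=
  stmt16_general S hSfin φ hφ μ
end
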